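/- A signed graph (G,σ) admits a nowhere-zero 2-flow if and only if each component of (G,σ) is eulerian and has an even number of negative edges. -/

import Mathlib

/-- A signed graph: a multigraph (loops and multiple edges allowed) with vertex type `V`
and edge type `E`, where edge `e` joins `fst e` and `snd e`, together with a signature
`sign : E → ℤ` taking values in `{1, -1}`. -/
structure SignedGraph (V E : Type) where
  fst : E → V
  snd : E → V
  sign : E → ℤ
  sign_unit : ∀ e, sign e = 1 ∨ sign e = -1

namespace SignedGraph

variable {V E : Type}

/-- A circuit in a signed graph: pairwise distinct vertices `vert 0, …, vert (n-1)` and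
pairwise distinct edges `edge 0, …, edge (n-1)` with `edge i` joining `vert i` and
`vert ((i+1) % n)`.  (`n = 1` gives a loop, `n = 2` a digon.) -/
structure Circuit (G : SignedGraph V E) where
  n : ℕ
  n_pos : 0 < n
  vert : ℕ → V
  edge : ℕ → E
  vert_inj : ∀ i < n, ∀ j < n, vert i = vert j → i = j
  edge_inj : ∀ i < n, ∀ j < n, edge i = edge j → i = j
  ends : ∀ i < n,
    (G.fst (edge i) = vert i ∧ G.snd (edge i) = vert ((i + 1) % n)) ∨
    (G.snd (edge i) = vert i ∧ G.fst (edge i) = vert ((i + 1) % n))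

namespace Circuit

variable {G : SignedGraph V E}

/-- Edge set of a circuit. -/
def edgeSet (c : Circuit G) : Set E := {e | ∃ i < c.n, c.edge i = e}

/-- Vertex set of a circuit. -/
def vertSet (c : Circuit G) : Set V := {v | ∃ i < c.n, c.vert i = v}

/-- The number of negative edges of a circuit. -/
noncomputable def negCount (c : Circuit G) : ℕ :=
  {i | i < c.n ∧ G.sign (c.edge i) = -1}.ncard

/-- A circuit is balanced if it contains an even number of negative edges. -/
def IsBalanced (c : Circuit G) : Prop := Even c.negCount

end Circuit

variable (G : SignedGraph V E)

/-- The endpoint of a half edge `(e, b)`: each edge `e` is regarded as the two half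
edges `(e, true)` (at `fst e`) and `(e, false)` (at `snd e`). -/
def ep (h : E × Bool) : V := if h.2 then G.fst h.1 else G.snd h.1

/-- An orientation assigns `±1` to each half edge so that the two half edges of an
edge `e` multiply to `- sign e`. -/
def IsOrientation (τ : E × Bool → ℤ) : Prop :=
  (∀ h, τ h = 1 ∨ τ h = -1) ∧ ∀ e : E, τ (e, true) * τ (e, false) = - G.sign e

/-- The boundary of `(τ, f)` at a vertex `v`: the sum of `τ h * f e` over all half
edges `h` of edges `e` incident with `v`. -/
noncomputable def boundary (τ : E × Bool → ℤ) (f : E → ℤ) (v : V) : ℤ :=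
  ∑ᶠ h ∈ {h : E × Bool | G.ep h = v}, τ h * f h.1

/-- `(τ, f)` is a `k`-flow: `τ` is an orientation, `|f e| ≤ k - 1` everywhere, and the
boundary vanishes at every vertex. -/
def IsFlow (k : ℤ) (τ : E × Bool → ℤ) (f : E → ℤ) : Prop :=
  G.IsOrientation τ ∧ (∀ e, |f e| ≤ k - 1) ∧ ∀ v, G.boundary τ f v = 0

/-- `(τ, f)` is a `ℤ_k`-flow: `τ` is an orientation, `|f e| ≤ k - 1` everywhere, and the
boundary is divisible by `k` at every vertex. -/
def IsZFlow (k : ℤ) (τ : E × Bool → ℤ) (f : E → ℤ) : Prop :=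
  G.IsOrientation τ ∧ (∀ e, |f e| ≤ k - 1) ∧ ∀ v, k ∣ G.boundary τ f v

/-- `f` is nowhere-zero. -/
def NowhereZero (_G : SignedGraph V E) (f : E → ℤ) : Prop := ∀ e, f e ≠ 0

/-- `G` admits a nowhere-zero `k`-flow. -/
def HasNZFlow (k : ℤ) : Prop := ∃ τ f, G.IsFlow k τ f ∧ G.NowhereZero f

/-- `G` is flow-admissible: it admits a nowhere-zero `k`-flow for some integer `k ≥ 2`. -/
def FlowAdmissible : Prop := ∃ k : ℤ, 2 ≤ k ∧ G.HasNZFlow k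

/-- The support of `f`. -/
def supp (_G : SignedGraph V E) (f : E → ℤ) : Set E := {e | f e ≠ 0}

/-- The degree of a vertex: the number of half edges incident with it (a loop counts
twice). -/
noncomputable def degree (v : V) : ℕ := {h : E × Bool | G.ep h = v}.ncard

/-- The degree of `v` in the subgraph with edge set `A`. -/
noncomputable def degIn (A : Set E) (v : V) : ℕ :=
  {h : E × Bool | h.1 ∈ A ∧ G.ep h = v}.ncard

/-- `G` is cubic: every vertex has degree 3. -/
def Cubic : Prop := ∀ v, G.degree v = 3

/-- Adjacency via an edge belonging to `A`. -/
def adjIn (A : Set E) (u v : V) : Prop :=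
  ∃ e ∈ A, (G.fst e = u ∧ G.snd e = v) ∨ (G.fst e = v ∧ G.snd e = u)

/-- Reachability inside the subgraph with edge set `A`. -/
def reachIn (A : Set E) : V → V → Prop := Relation.ReflTransGen (G.adjIn A)

/-- `G` is connected. -/
def Connected : Prop := ∀ u v, G.reachIn Set.univ u v

/-- `e` is a bridge (cut edge) of the underlying graph. -/
def IsBridge (e : E) : Prop := ¬ G.reachIn {e' | e' ≠ e} (G.fst e) (G.snd e)

/-- `G` is bridgeless. -/
def Bridgeless : Prop := ∀ e, ¬ G.IsBridge e

/-- The edge set `A` contains no circuit. -/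
def Acyclic (A : Set E) : Prop := ∀ c : Circuit G, ¬ c.edgeSet ⊆ A

/-- Every circuit with all edges in `A` is balanced. -/
def BalancedOn (A : Set E) : Prop := ∀ c : Circuit G, c.edgeSet ⊆ A → c.IsBalanced

/-- `G` is balanced: it contains no unbalanced circuit. -/
def Balanced : Prop := ∀ c : Circuit G, c.IsBalanced

/-- The number of negative edges in `A`. -/
noncomputable def negEdgeCount (A : Set E) : ℕ := {e ∈ A | G.sign e = -1}.ncard

/-- The edges of the connected component of `v` in the subgraph with edge set `A`. -/
def compEdges (A : Set E) (v : V) : Set E := {e ∈ A | G.reachIn A v (G.fst e)}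

/-- The number of (nonempty) components of the subgraph with edge set `A` containing an
odd number of negative edges. -/
noncomputable def oddCompCount (A : Set E) : ℕ :=
  {S : Set E | (∃ v, S = G.compEdges A v) ∧ S.Nonempty ∧ Odd (G.negEdgeCount S)}.ncard

/-- The number of unbalanced circuits (counted by their edge sets) all of whose edges
lie in `A`. -/
noncomputable def unbalCircCount (A : Set E) : ℕ :=
  {S : Set E | ∃ c : Circuit G, c.edgeSet = S ∧ S ⊆ A ∧ ¬ c.IsBalanced}.ncard

/-- Vertices incident with an edge of `A`. -/
def vertsIn (A : Set E) : Set V := {v | ∃ e ∈ A, G.fst e = v ∨ G.snd e = v}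

/-- A proper 3-edge-coloring: edges sharing an endvertex receive different colors. -/
def IsProper3EdgeColoring (col : E → Fin 3) : Prop :=
  ∀ e e', e ≠ e' →
    (G.fst e = G.fst e' ∨ G.fst e = G.snd e' ∨ G.snd e = G.fst e' ∨ G.snd e = G.snd e') →
    col e ≠ col e'

/-- `G` is 3-edge-colorable. -/
def ThreeEdgeColorable : Prop := ∃ col : E → Fin 3, G.IsProper3EdgeColoring col

/-- `G` is hamiltonian: it contains a circuit through all vertices. -/
def Hamiltonian : Prop := ∃ c : Circuit G, ∀ v : V, v ∈ c.vertSet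

end SignedGraph

/-!
A 2-flow `(τ, f)` with `f = ±1` is the same as the single orientation `h ↦ τ h * f h` in which
every vertex carries as many half edges of sign `+1` as of sign `-1`. Such a vertex has even
degree. Summing over the half edges of a component, an edge contributes `τ h + τ h'`, which is
`0` for a positive edge and `2 τ h = ±2` for a negative one; so the signs `τ h` of the negative
edges cancel, and there is an even number of them.

Conversely, orient each component along an Euler tour: a half edge gets sign `-1` where the tour
leaves a vertex and `+1` where it enters, which is consistent at positive edges, while a negative
edge flips the running sign. The tour closes up consistently exactly when the component has an
even number of negative edges. The tour is built by induction on the number of edges, as a trail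
between the two odd vertices `a`, `b` of a connected edge set: removing an edge at `a` leaves a
trail from its other end to `b`, together with possibly a closed trail through `a`.
-/

open Finset

lemma even_card_of_sum_eq_zero {α : Type*} {F : Finset α} {g : α → ℤ}
    (hg : ∀ x ∈ F, g x = 1 ∨ g x = -1) (h : ∑ x ∈ F, g x = 0) : Even F.card := by
  have hg2 : ∀ x ∈ F, (g x : ZMod 2) = 1 := fun x hx => by
    rcases hg x hx with h | h <;> simp [h]
  have hcast := congrArg (Int.cast : ℤ → ZMod 2) h
  rw [Int.cast_sum, sum_congr rfl hg2, Int.cast_zero] at hcast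
  simpa [← ZMod.natCast_eq_zero_iff_even] using hcast

namespace SignedGraph

variable {V E : Type} {G : SignedGraph V E}

lemma sign_mul_self (e : E) : G.sign e * G.sign e = 1 := by
  rcases G.sign_unit e with h | h <;> simp [h]

lemma prod_sign_mul_self (S : Finset E) :
    (∏ e ∈ S, G.sign e) * (∏ e ∈ S, G.sign e) = 1 := by
  rw [← prod_mul_distrib]
  exact prod_eq_one fun e _ => sign_mul_self e

lemma negEdgeCount_coe (S : Finset E) :
    G.negEdgeCount S = (S.filter (G.sign · = -1)).card := by
  rw [negEdgeCount, ← Set.ncard_coe_finset]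
  congr
  ext
  simp

lemma prod_sign_eq_one_of_even {S : Finset E} (h : Even (G.negEdgeCount S)) :
    ∏ e ∈ S, G.sign e = 1 := by
  rw [negEdgeCount_coe] at h
  rw [← prod_filter_mul_prod_filter_not S (G.sign · = -1),
    prod_congr rfl fun e he => (mem_filter.1 he).2, prod_const, h.neg_one_pow, one_mul]
  exact prod_eq_one fun e he => (G.sign_unit e).resolve_right (mem_filter.1 he).2

@[simp] lemma ep_true (e : E) : G.ep (e, true) = G.fst e := rfl

@[simp] lemma ep_false (e : E) : G.ep (e, false) = G.snd e := rfl

section Reachability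

variable {A : Set E} {u v : V}

lemma adjIn_symm (h : G.adjIn A u v) : G.adjIn A v u := by
  obtain ⟨e, he, h⟩ := h
  exact ⟨e, he, h.symm⟩

lemma reachIn_symm (h : G.reachIn A u v) : G.reachIn A v u := by
  induction h with
  | refl => exact .refl
  | tail _ hadj ih => exact .head (adjIn_symm hadj) ih

lemma reachIn_fst_iff_snd {e : E} (he : e ∈ A) :
    G.reachIn A u (G.fst e) ↔ G.reachIn A u (G.snd e) :=
  ⟨fun h => h.tail ⟨e, he, Or.inl ⟨rfl, rfl⟩⟩, fun h => h.tail ⟨e, he, Or.inr ⟨rfl, rfl⟩⟩⟩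

lemma reachIn_ep_iff {h : E × Bool} (he : h.1 ∈ A) :
    G.reachIn A u (G.ep h) ↔ G.reachIn A u (G.fst h.1) := by
  obtain ⟨e, _ | _⟩ := h
  · exact (reachIn_fst_iff_snd he).symm
  · rfl

lemma reachIn_erase [DecidableEq E] {S : Finset E} {h : E × Bool} {x : V}
    (hx : G.reachIn S (G.ep h) x) :
    G.reachIn (S.erase h.1 : Finset E) (G.ep h) x ∨
      G.reachIn (S.erase h.1 : Finset E) (G.ep (h.1, !h.2)) x := by
  induction hx with
  | refl => exact Or.inl .refl
  | @tail y z _ hadj ih =>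
    obtain ⟨g, hg, hends⟩ := hadj
    by_cases hgh : g = h.1
    · have hz : z = G.ep h ∨ z = G.ep (h.1, !h.2) := by
        subst hgh
        obtain ⟨e, _ | _⟩ := h <;> rcases hends with ⟨-, rfl⟩ | ⟨rfl, -⟩ <;> simp
      rcases hz with rfl | rfl
      exacts [Or.inl .refl, Or.inr .refl]
    · have hg' : g ∈ ((S.erase h.1 : Finset E) : Set E) := by simp_all
      exact ih.imp (·.tail ⟨g, hg', hends⟩) (·.tail ⟨g, hg', hends⟩)

end Reachability

def reachSetoid (G : SignedGraph V E) (A : Set E) : Setoid V where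
  r := G.reachIn A
  iseqv := ⟨fun _ => .refl, reachIn_symm, .trans⟩

def ConnectedFrom (G : SignedGraph V E) (S : Finset E) (a : V) : Prop :=
  ∀ e ∈ S, G.reachIn S a (G.fst e)

open scoped Classical in
noncomputable def compFinset (G : SignedGraph V E) (S : Finset E) (a : V) : Finset E :=
  S.filter fun e => G.reachIn S a (G.fst e)

section Component

variable {S : Finset E} {a x : V}

lemma mem_compFinset {e : E} : e ∈ G.compFinset S a ↔ e ∈ S ∧ G.reachIn S a (G.fst e) := by
  simp [compFinset]

lemma coe_compFinset : (G.compFinset S a : Set E) = G.compEdges S a := by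
  ext
  simp [mem_compFinset, compEdges]

lemma reachIn_compFinset (hx : G.reachIn S a x) : G.reachIn (G.compFinset S a) a x := by
  induction hx with
  | refl => exact .refl
  | @tail y z hy hadj ih =>
    obtain ⟨e, he, hends⟩ := hadj
    have hfst : G.reachIn S a (G.fst e) := by
      rcases hends with ⟨h, -⟩ | ⟨h, h'⟩
      exacts [h ▸ hy, h ▸ hy.tail ⟨e, he, Or.inr ⟨h, h'⟩⟩]
    exact ih.tail ⟨e, mem_compFinset.2 ⟨he, hfst⟩, hends⟩

lemma connectedFrom_compFinset : G.ConnectedFrom (G.compFinset S a) a :=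
  fun _ he => reachIn_compFinset (mem_compFinset.1 he).2

lemma ConnectedFrom.exists_halfEdge (hS : G.ConnectedFrom S a) (hne : S.Nonempty) :
    ∃ h : E × Bool, h.1 ∈ S ∧ G.ep h = a := by
  obtain ⟨g, hg⟩ := hne
  rcases (hS g hg).cases_head with h | ⟨c, ⟨e, he, hends⟩, -⟩
  · exact ⟨(g, true), hg, h.symm⟩
  · rcases hends with ⟨h, -⟩ | ⟨-, h⟩
    exacts [⟨(e, true), he, h⟩, ⟨(e, false), he, h⟩]

end Component

structure IsOrientationOn (G : SignedGraph V E) (S : Finset E) (τ : E × Bool → ℤ) : Prop where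
  unit : ∀ h : E × Bool, h.1 ∈ S → τ h = 1 ∨ τ h = -1
  eq_zero : ∀ h : E × Bool, h.1 ∉ S → τ h = 0
  mul : ∀ e ∈ S, τ (e, true) * τ (e, false) = -G.sign e

namespace IsOrientationOn

variable {S T : Finset E} {τ σ : E × Bool → ℤ}

lemma empty : G.IsOrientationOn ∅ 0 :=
  ⟨fun _ h => absurd h (notMem_empty _), fun _ _ => rfl, fun _ h => absurd h (notMem_empty _)⟩

lemma union [DecidableEq E] (hτ : G.IsOrientationOn S τ) (hσ : G.IsOrientationOn T σ)
    (hST : Disjoint S T) : G.IsOrientationOn (S ∪ T) (τ + σ) := by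
  have hσS : ∀ h : E × Bool, h.1 ∈ S → σ h = 0 := fun h hS =>
    hσ.eq_zero h (disjoint_left.1 hST hS)
  have hτT : ∀ h : E × Bool, h.1 ∈ T → τ h = 0 := fun h hT =>
    hτ.eq_zero h (disjoint_right.1 hST hT)
  refine ⟨fun h hh => ?_, fun h hh => ?_, fun e he => ?_⟩
  · rcases mem_union.1 hh with hS | hT
    · simpa [hσS h hS] using hτ.unit h hS
    · simpa [hτT h hT] using hσ.unit h hT
  · simp only [mem_union, not_or] at hh
    simp [hτ.eq_zero h hh.1, hσ.eq_zero h hh.2]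
  · rcases mem_union.1 he with hS | hT
    · simpa [hσS (e, true) hS, hσS (e, false) hS] using hτ.mul e hS
    · simpa [hτT (e, true) hT, hτT (e, false) hT] using hσ.mul e hT

lemma smul (hτ : G.IsOrientationOn S τ) {c : ℤ} (hc : c * c = 1) :
    G.IsOrientationOn S (c • τ) := by
  refine ⟨fun h hh => ?_, fun h hh => by simp [hτ.eq_zero h hh], fun e he => ?_⟩
  · rcases mul_self_eq_one_iff.1 hc with rfl | rfl <;>
      rcases hτ.unit h hh with h' | h' <;> simp [h']
  · simp only [Pi.smul_apply, smul_eq_mul]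
    linear_combination (τ (e, true) * τ (e, false)) * hc + hτ.mul e he

end IsOrientationOn

lemma IsOrientation.mul_unit {τ : E × Bool → ℤ} {f : E → ℤ} (hτ : G.IsOrientation τ)
    (hf : ∀ e, f e = 1 ∨ f e = -1) : G.IsOrientation fun h => τ h * f h.1 := by
  refine ⟨fun h => ?_, fun e => ?_⟩
  · rcases hτ.1 h with h1 | h1 <;> rcases hf h.1 with h2 | h2 <;> simp [h1, h2]
  · have hf2 : f e * f e = 1 := by rcases hf e with h | h <;> simp [h]
    linear_combination (f e * f e) * hτ.2 e - G.sign e * hf2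

section EdgeOrientation

variable [DecidableEq E]

def edgeOrientation (G : SignedGraph V E) (h₀ : E × Bool) : E × Bool → ℤ :=
  fun h => if h = h₀ then -1 else if h.1 = h₀.1 then G.sign h₀.1 else 0

lemma isOrientationOn_edgeOrientation (h₀ : E × Bool) :
    G.IsOrientationOn {h₀.1} (G.edgeOrientation h₀) := by
  obtain ⟨e, b⟩ := h₀
  refine ⟨fun h hh => ?_, fun h hh => ?_, fun e' he' => ?_⟩
  · rw [mem_singleton] at hh
    unfold edgeOrientation
    split_ifs <;> simp_all [G.sign_unit e]
  · rw [mem_singleton] at hh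
    have hne : h ≠ (e, b) := by rintro rfl; exact hh rfl
    simp [edgeOrientation, hne, hh]
  · rw [mem_singleton] at he'
    subst he'
    cases b <;> simp [edgeOrientation]

end EdgeOrientation

section TrailParity

variable [DecidableEq V] {S : Finset E} {a b : V}

/-- The vertices of odd degree in `S` are `a` and `b`; there are none if `a = b`. -/
def TrailParity (G : SignedGraph V E) (S : Finset E) (a b : V) : Prop :=
  ∀ v, Even (G.degIn S v + (if a = v then 1 else 0) + (if b = v then 1 else 0))

lemma trailParity_self_iff : G.TrailParity S a a ↔ ∀ v, Even (G.degIn S v) :=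
  forall_congr' fun v => by simp only [Nat.even_iff]; omega

lemma TrailParity.eq_of_empty (hpar : G.TrailParity ∅ a b) : a = b := by
  by_contra hab
  simpa [degIn, Ne.symm hab] using hpar a

end TrailParity

lemma degIn_univ [Fintype E] (v : V) : G.degIn (univ : Finset E) v = G.degree v := by
  rw [coe_univ, degIn, degree]
  simp

section Finite

variable [DecidableEq V] [DecidableEq E] [Fintype E]

def halfEdgesAt (G : SignedGraph V E) (S : Finset E) (v : V) : Finset (E × Bool) :=
  univ.filter fun h => h.1 ∈ S ∧ G.ep h = v

def incSum {M : Type*} [AddCommMonoid M] (G : SignedGraph V E) (S : Finset E)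
    (σ : E × Bool → M) (v : V) : M :=
  ∑ h ∈ G.halfEdgesAt S v, σ h

section IncSum

variable {M : Type*} [AddCommMonoid M] {S T : Finset E} {σ : E × Bool → M} {v : V}

lemma incSum_add (σ σ' : E × Bool → M) :
    G.incSum S (σ + σ') v = G.incSum S σ v + G.incSum S σ' v :=
  sum_add_distrib

lemma incSum_smul (c : ℤ) (τ : E × Bool → ℤ) : G.incSum S (c • τ) v = c * G.incSum S τ v := by
  simp [incSum, mul_sum]

lemma incSum_union (hST : Disjoint S T) :
    G.incSum (S ∪ T) σ v = G.incSum S σ v + G.incSum T σ v := by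
  rw [incSum, incSum, incSum, ← sum_union]
  · congr 1
    ext h
    simp [halfEdgesAt, or_and_right]
  · rw [disjoint_left]
    simp only [halfEdgesAt, mem_filter, mem_univ, true_and, not_and, and_imp]
    exact fun h hS _ hT => (disjoint_left.1 hST hS hT).elim

lemma incSum_singleton (h : E × Bool) :
    G.incSum {h.1} σ v = (if G.ep h = v then σ h else 0) +
      (if G.ep (h.1, !h.2) = v then σ (h.1, !h.2) else 0) := by
  have hne : h ≠ (h.1, !h.2) := by simp [Prod.ext_iff]
  have hhalf : G.halfEdgesAt {h.1} v = ({h, (h.1, !h.2)} : Finset _).filter (G.ep · = v) := by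
    obtain ⟨e, b⟩ := h
    ext ⟨e', b'⟩
    cases b <;> cases b' <;> simp [halfEdgesAt, and_comm]
  rw [incSum, hhalf, sum_filter, sum_pair hne]

lemma incSum_of_eq_zero (hST : S ⊆ T) (hσ : ∀ h : E × Bool, h.1 ∉ S → σ h = 0) :
    G.incSum T σ v = G.incSum S σ v := by
  refine (sum_subset (fun h => ?_) fun h hT hS => hσ h ?_).symm <;>
    simp only [halfEdgesAt, mem_filter, mem_univ, true_and] at *
  · exact fun hh => ⟨hST hh.1, hh.2⟩
  · exact fun hh => hS ⟨hh, hT.2⟩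

lemma sum_incSum [Fintype V] (S : Finset E) (σ : E × Bool → M) :
    ∑ v, G.incSum S σ v = ∑ e ∈ S, (σ (e, true) + σ (e, false)) := by
  have hS : univ.filter (fun h : E × Bool => h.1 ∈ S) = S ×ˢ univ := by ext; simp
  simp_rw [incSum, halfEdgesAt, ← filter_filter]
  rw [sum_fiberwise, hS, sum_product]
  simp

end IncSum

lemma degIn_eq_incSum (S : Finset E) (v : V) : G.degIn S v = G.incSum S (fun _ => 1) v := by
  rw [degIn, incSum, ← card_eq_sum_ones, ← Set.ncard_coe_finset]
  congr 1
  ext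
  simp [halfEdgesAt]

lemma boundary_eq_incSum (τ : E × Bool → ℤ) (f : E → ℤ) (v : V) :
    G.boundary τ f v = G.incSum univ (fun h => τ h * f h.1) v := by
  rw [boundary, incSum, ← finsum_mem_coe_finset]
  congr
  ext
  simp [halfEdgesAt]

lemma sum_degIn [Fintype V] (S : Finset E) : ∑ v, G.degIn S v = 2 * S.card := by
  simp_rw [degIn_eq_incSum, sum_incSum]
  simp [mul_comm]

lemma degIn_erase {S : Finset E} {h : E × Bool} (he : h.1 ∈ S) (v : V) :
    G.degIn S v = G.degIn (S.erase h.1) v + (if G.ep h = v then 1 else 0) +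
      (if G.ep (h.1, !h.2) = v then 1 else 0) := by
  have hS : S = S.erase h.1 ∪ {h.1} := by rw [union_comm, ← insert_eq, insert_erase he]
  conv_lhs => rw [hS]
  rw [degIn_eq_incSum, degIn_eq_incSum,
    incSum_union (disjoint_singleton_right.2 (notMem_erase _ _)), incSum_singleton, add_assoc]

lemma incSum_edgeOrientation (h₀ : E × Bool) (v : V) :
    G.incSum univ (G.edgeOrientation h₀) v =
      G.sign h₀.1 * (if G.ep (h₀.1, !h₀.2) = v then 1 else 0) - (if G.ep h₀ = v then 1 else 0) := by
  rw [incSum_of_eq_zero (subset_univ _) (isOrientationOn_edgeOrientation h₀).eq_zero,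
    incSum_singleton]
  have hne : (h₀.1, !h₀.2) ≠ h₀ := by simp [Prod.ext_iff]
  simp only [edgeOrientation, hne, if_true, if_false]
  split_ifs <;> ring

section Component

variable {S : Finset E} {a : V}

open scoped Classical in
lemma halfEdgesAt_compFinset (v : V) :
    G.halfEdgesAt (G.compFinset S a) v =
      if G.reachIn S a v then G.halfEdgesAt S v else ∅ := by
  ext h
  split_ifs with hv <;> simp only [halfEdgesAt, mem_filter, mem_univ, true_and, mem_compFinset]
  · exact ⟨fun ⟨⟨hS, _⟩, hep⟩ => ⟨hS, hep⟩,
      fun ⟨hS, hep⟩ => ⟨⟨hS, (reachIn_ep_iff hS).1 (hep ▸ hv)⟩, hep⟩⟩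
  · simp only [notMem_empty, iff_false, not_and, and_imp]
    exact fun hS hr hep => hv (hep ▸ (reachIn_ep_iff hS).2 hr)

open scoped Classical in
lemma incSum_compFinset {M : Type*} [AddCommMonoid M] (σ : E × Bool → M) (v : V) :
    G.incSum (G.compFinset S a) σ v = if G.reachIn S a v then G.incSum S σ v else 0 := by
  rw [incSum, halfEdgesAt_compFinset]
  split_ifs <;> simp [incSum]

open scoped Classical in
lemma degIn_compFinset (v : V) :
    G.degIn (G.compFinset S a) v = if G.reachIn S a v then G.degIn S v else 0 := by
  simp_rw [degIn_eq_incSum, incSum_compFinset]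

end Component

lemma TrailParity.erase {S : Finset E} {h : E × Bool} {b : V} (hpar : G.TrailParity S (G.ep h) b)
    (he : h.1 ∈ S) :
    G.TrailParity (S.erase h.1) (G.ep (h.1, !h.2)) b := by
  intro v
  have hv := hpar v
  rw [degIn_erase he] at hv
  simp only [Nat.even_iff] at hv ⊢
  omega

section FiniteVertices

variable [Fintype V]

section Parity

variable {S : Finset E} {a b : V}

/-- The two ends of a trail lie in the same component: otherwise the component of `a` would
have exactly one vertex of odd degree. -/
lemma TrailParity.reachIn (hpar : G.TrailParity S a b) : G.reachIn S a b := by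
  by_contra hab
  have hev : ∀ v, Even (G.degIn (G.compFinset S a) v + if a = v then 1 else 0) := by
    intro v
    rw [degIn_compFinset]
    by_cases hv : G.reachIn S a v
    · have hb : b ≠ v := by rintro rfl; exact hab hv
      simpa [hv, hb] using hpar v
    · have ha : a ≠ v := by rintro rfl; exact hv .refl
      simp [hv, ha]
  have hsum : Even (∑ v, (G.degIn (G.compFinset S a) v + if a = v then 1 else 0)) :=
    Finset.even_sum _ fun v _ => hev v
  rw [sum_add_distrib, sum_degIn, sum_ite_eq] at hsum
  simp at hsum

lemma TrailParity.compFinset (hpar : G.TrailParity S a b) :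
    G.TrailParity (G.compFinset S a) a b := by
  intro v
  rw [degIn_compFinset]
  by_cases hv : G.reachIn S a v
  · simpa [hv] using hpar v
  · have ha : a ≠ v := by rintro rfl; exact hv .refl
    have hb : b ≠ v := by rintro rfl; exact hv hpar.reachIn
    simp [hv, ha, hb]

lemma TrailParity.compFinset_of_not_reachIn (hpar : G.TrailParity S a b) {c : V}
    (hc : ¬ G.reachIn S c a) : G.TrailParity (G.compFinset S c) c c := by
  refine trailParity_self_iff.2 fun v => ?_
  rw [degIn_compFinset]
  by_cases hv : G.reachIn S c v
  · have ha : a ≠ v := by rintro rfl; exact hc hv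
    have hb : b ≠ v := by rintro rfl; exact hc (hv.trans (reachIn_symm hpar.reachIn))
    simpa [hv, ha, hb] using hpar v
  · simp [hv]

end Parity

lemma ConnectedFrom.exists_split {S : Finset E} {h₀ : E × Bool} {b : V}
    (hS : G.ConnectedFrom S (G.ep h₀)) (hpar : G.TrailParity S (G.ep h₀) b) (he : h₀.1 ∈ S) :
    ∃ C₁ C₂ : Finset E, Disjoint C₁ C₂ ∧ C₁ ∪ C₂ = S.erase h₀.1 ∧
      G.ConnectedFrom C₁ (G.ep (h₀.1, !h₀.2)) ∧ G.TrailParity C₁ (G.ep (h₀.1, !h₀.2)) b ∧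
      G.ConnectedFrom C₂ (G.ep h₀) ∧ G.TrailParity C₂ (G.ep h₀) (G.ep h₀) := by
  set a := G.ep h₀
  set a' := G.ep (h₀.1, !h₀.2)
  set S' := S.erase h₀.1
  have hpar' : G.TrailParity S' a' b := hpar.erase he
  have hcover : ∀ e ∈ S', G.reachIn S' a (G.fst e) ∨ G.reachIn S' a' (G.fst e) :=
    fun e he' => reachIn_erase (hS e (mem_of_mem_erase he'))
  by_cases ha' : G.reachIn S' a' a
  · refine ⟨S', ∅, disjoint_empty_right _, union_empty _, fun e he' => ?_, hpar',
      fun _ h => absurd h (notMem_empty _), trailParity_self_iff.2 fun v => by simp [degIn]⟩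
    exact (hcover e he').elim ha'.trans id
  · refine ⟨G.compFinset S' a', G.compFinset S' a, disjoint_left.2 fun e h₁ h₂ => ha' ?_, ?_,
      connectedFrom_compFinset, hpar'.compFinset, connectedFrom_compFinset,
      hpar'.compFinset_of_not_reachIn fun h => ha' (reachIn_symm h)⟩
    · exact (mem_compFinset.1 h₁).2.trans (reachIn_symm (mem_compFinset.1 h₂).2)
    · ext e
      simp only [mem_union, mem_compFinset]
      constructor
      · rintro (⟨he, -⟩ | ⟨he, -⟩) <;> exact he
      · exact fun he => (hcover e he).symm.imp (⟨he, ·⟩) (⟨he, ·⟩)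

/-- An Euler trail of `S` from `a` to `b`, read as an orientation: it leaves `a` with sign `-1`
and arrives at `b` with the product of the signs of `S`. -/
theorem exists_trail_orientation (S : Finset E) {a b : V} (hS : G.ConnectedFrom S a)
    (hpar : G.TrailParity S a b) :
    ∃ τ, G.IsOrientationOn S τ ∧ ∀ v, G.incSum univ τ v =
      (∏ e ∈ S, G.sign e) * (if b = v then 1 else 0) - (if a = v then 1 else 0) := by
  induction S using Finset.strongInduction generalizing a b with
  | H S ih =>
  rcases S.eq_empty_or_nonempty with rfl | hne
  · obtain rfl := hpar.eq_of_empty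
    exact ⟨0, .empty, fun v => by simp [incSum]⟩
  obtain ⟨h₀, he, rfl⟩ := hS.exists_halfEdge hne
  obtain ⟨C₁, C₂, hdisj, hunion, hc₁, hp₁, hc₂, hp₂⟩ := hS.exists_split hpar he
  have hsub : C₁ ∪ C₂ ⊂ S := hunion ▸ erase_ssubset he
  obtain ⟨τ₁, hτ₁, hB₁⟩ := ih C₁ (subset_union_left.trans_ssubset hsub) hc₁ hp₁
  obtain ⟨τ₂, hτ₂, hB₂⟩ := ih C₂ (subset_union_right.trans_ssubset hsub) hc₂ hp₂
  have hS_eq : {h₀.1} ∪ (C₁ ∪ C₂) = S := by rw [hunion, ← insert_eq, insert_erase he]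
  have hdisj₀ : Disjoint {h₀.1} (C₁ ∪ C₂) := by
    rw [hunion]
    exact disjoint_singleton_left.2 (notMem_erase _ _)
  set s₂ := ∏ e ∈ C₂, G.sign e
  have hs₂ : s₂ * s₂ = 1 := prod_sign_mul_self C₂
  have hs₂e : (s₂ * G.sign h₀.1) * (s₂ * G.sign h₀.1) = 1 := by
    linear_combination (G.sign h₀.1 * G.sign h₀.1) * hs₂ + sign_mul_self h₀.1
  -- walk around the closed trail `C₂`, cross `h₀.1`, then follow `C₁` to `b`; each piece is
  -- rescaled to start with the sign on which the previous one ended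
  refine ⟨s₂ • G.edgeOrientation h₀ + ((s₂ * G.sign h₀.1) • τ₁ + τ₂), ?_, fun v => ?_⟩
  · rw [← hS_eq]
    exact ((isOrientationOn_edgeOrientation h₀).smul hs₂).union
      ((hτ₁.smul hs₂e).union hτ₂ hdisj) hdisj₀
  · rw [← hS_eq, prod_union hdisj₀, prod_union hdisj, prod_singleton, incSum_add, incSum_add,
      incSum_smul, incSum_smul, incSum_edgeOrientation, hB₁, hB₂]
    ring

/-- Orient every component by a closed trail through it; the orientations are glued along a
choice of one base vertex per component. -/
theorem exists_balanced_orientation (hdeg : ∀ v, Even (G.degree v))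
    (hneg : ∀ v, Even (G.negEdgeCount (G.compEdges Set.univ v))) :
    ∃ τ, G.IsOrientation τ ∧ ∀ v, G.incSum univ τ v = 0 := by
  have hcomp : ∀ w, ∃ τ, G.IsOrientationOn (G.compFinset univ w) τ ∧
      ∀ v, G.incSum univ τ v = 0 := by
    intro w
    have hpar : G.TrailParity (G.compFinset univ w) w w :=
      (trailParity_self_iff.2 fun v => degIn_univ (G := G) v ▸ hdeg v).compFinset
    obtain ⟨τ, hτ, hB⟩ := exists_trail_orientation _ connectedFrom_compFinset hpar
    have hsg : ∏ e ∈ G.compFinset univ w, G.sign e = 1 :=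
      prod_sign_eq_one_of_even (by rw [coe_compFinset, coe_univ]; exact hneg w)
    exact ⟨τ, hτ, fun v => by simp [hB, hsg]⟩
  choose τ hτ hB using hcomp
  let R := G.reachSetoid Set.univ
  let r : V → V := fun v => (Quotient.mk R v).out
  have hr : ∀ {u v}, G.reachIn Set.univ u v → r u = r v := fun huv =>
    congrArg Quotient.out (Quotient.sound huv)
  have hmem : ∀ h : E × Bool, h.1 ∈ G.compFinset univ (r (G.fst h.1)) := fun h =>
    mem_compFinset.2 ⟨mem_univ _, by rw [coe_univ]; exact Quotient.mk_out (s := R) _⟩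
  refine ⟨fun h => τ (r (G.fst h.1)) h,
    ⟨fun h => (hτ _).unit h (hmem h), fun e => (hτ _).mul e (hmem (e, true))⟩, fun v => ?_⟩
  rw [← hB (r v) v]
  refine sum_congr rfl fun h hh => ?_
  have hv : G.ep h = v := (mem_filter.1 hh).2.2
  have hrv : G.reachIn Set.univ (G.fst h.1) v :=
    hv ▸ (reachIn_ep_iff (Set.mem_univ h.1)).2 .refl
  exact congrArg (τ · h) (hr hrv)

end FiniteVertices

lemma IsOrientation.even_degree {τ : E × Bool → ℤ} (hτ : G.IsOrientation τ)
    (hB : ∀ v, G.incSum univ τ v = 0) (v : V) : Even (G.degree v) := by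
  rw [← degIn_univ, degIn_eq_incSum, incSum, ← card_eq_sum_ones]
  exact even_card_of_sum_eq_zero (fun h _ => hτ.1 h) (hB v)

lemma IsOrientation.even_negEdgeCount [Fintype V] {τ : E × Bool → ℤ} (hτ : G.IsOrientation τ)
    (hB : ∀ v, G.incSum univ τ v = 0) (w : V) :
    Even (G.negEdgeCount (G.compEdges Set.univ w)) := by
  rw [← coe_univ, ← coe_compFinset, negEdgeCount_coe]
  refine even_card_of_sum_eq_zero (g := fun e => τ (e, true)) (fun e _ => hτ.1 _) ?_
  have hzero : ∑ v, G.incSum (G.compFinset univ w) τ v = 0 :=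
    sum_eq_zero fun v _ => by rw [incSum_compFinset, hB]; simp
  have hedge : ∀ e, τ (e, true) + τ (e, false) = if G.sign e = -1 then 2 * τ (e, true) else 0 := by
    intro e
    have hmul := hτ.2 e
    rcases hτ.1 (e, true) with h1 | h1 <;> rcases hτ.1 (e, false) with h2 | h2 <;>
      rcases G.sign_unit e with hs | hs <;> simp_all
  rw [sum_incSum, sum_congr rfl fun e _ => hedge e, ← sum_filter, ← mul_sum] at hzero
  simpa using hzero

end Finite

end SignedGraph

/-- A signed graph admits a nowhere-zero 2-flow if and only if each
component is eulerian (connected with all degrees even) and has an even number of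
negative edges. -/
theorem stmt_6 {V E : Type} [Fintype V] [Fintype E] (G : SignedGraph V E) :
    G.HasNZFlow 2 ↔
      (∀ v : V, Even (G.degree v)) ∧
      (∀ v : V, Even (G.negEdgeCount (G.compEdges Set.univ v))) := by
  classical
  constructor
  · rintro ⟨τ, f, ⟨hτ, hf, hb⟩, hnz⟩
    have hunit : ∀ e, f e = 1 ∨ f e = -1 := fun e => by
      have hle := abs_le.1 (hf e)
      have hne := hnz e
      omega
    have hB : ∀ v, G.incSum univ (fun h => τ h * f h.1) v = 0 := fun v =>
      G.boundary_eq_incSum τ f v ▸ hb v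
    exact ⟨(hτ.mul_unit hunit).even_degree hB, (hτ.mul_unit hunit).even_negEdgeCount hB⟩
  · rintro ⟨hdeg, hneg⟩
    obtain ⟨τ, hτ, hB⟩ := SignedGraph.exists_balanced_orientation hdeg hneg
    refine ⟨τ, 1, ⟨hτ, fun e => by norm_num, fun v => ?_⟩, fun e => one_ne_zero⟩
    simpa [SignedGraph.boundary_eq_incSum] using hB v
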